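/- arXiv:1105.4435 — 2 statements merged into one kernel-verified Lean document; each statement's English description precedes it below -/
import Mathlib

section
/- There are no integers M, N, not both zero, such that (7 + 4√3)^M = (4 + √15)^N. -/
/-!
Every integral power of the unit `7 + 4√3` of `ℤ[√3]` is again a unit `a + b√3`, and every
integral power of `4 + √15` is a unit `c + e√15`. Since `1, √3, √15` are linearly independent
over `ℚ`, an equality `a + b√3 = c + e√15` forces `b = 0`; a unit of `ℤ[√3]` lying in `ℤ` is
`±1`, and positivity leaves `(7 + 4√3)^M = 1 = (4 + √15)^N`, so `M = N = 0`.
-/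

open Real

lemma IsUnit.exists_isUnit_map_eq_zpow {R K F : Type*} [Monoid R] [GroupWithZero K]
    [FunLike F R K] [MonoidHomClass F R K] (f : F) {z : R} (hz : IsUnit z) (n : ℤ) :
    ∃ w : R, IsUnit w ∧ f w = f z ^ n := by
  obtain ⟨u, rfl⟩ := hz
  refine ⟨↑(u ^ n), (u ^ n).isUnit, ?_⟩
  change ((Units.map (f : R →* K) (u ^ n) : Kˣ) : K) = _
  rw [map_zpow, Units.val_zpow_eq_zpow_val]
  rfl

namespace Zsqrtd

lemma isUnit_re_of_im_eq_zero {d : ℤ} {z : ℤ√d} (hz : IsUnit z) (him : z.im = 0) :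
    IsUnit z.re := by
  rw [isUnit_iff_norm_isUnit, norm_def, him] at hz
  simpa [← sq] using hz

lemma toReal_eq_one_of_isUnit {d : ℤ} (hd : 0 ≤ d) {z : ℤ√d} (hz : IsUnit z) (him : z.im = 0)
    (hpos : 0 < toReal hd z) : toReal hd z = 1 := by
  rw [toReal_apply, him] at hpos ⊢
  rcases Int.isUnit_iff.mp (isUnit_re_of_im_eq_zero hz him) with h | h
  · simp [h]
  · norm_num [h] at hpos

end Zsqrtd

lemma Irrational.eq_zero_of_intCast_mul_eq_intCast {x : ℝ} (hx : Irrational x) {m n : ℤ}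
    (h : m * x = n) : m = 0 := by
  by_contra hm
  exact (hx.intCast_mul hm).ne_int n h

lemma irrational_sqrt_fifteen : Irrational √15 := by
  have : ¬ IsSquare 15 := by
    rintro ⟨k, hk⟩
    have : k ≤ 4 := by nlinarith
    interval_cases k <;> omega
  exact_mod_cast irrational_sqrt_natCast_iff.mpr this

lemma eq_zero_of_add_mul_sqrt_three_eq_add_mul_sqrt_fifteen {a b c e : ℤ}
    (h : a + b * √3 = c + e * √15) : b = 0 ∧ e = 0 := by
  have irr3 : Irrational √3 := by simpa using Nat.prime_three.irrational_sqrt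
  have irr5 : Irrational √5 := by simpa using Nat.prime_five.irrational_sqrt
  have s3 : √3 ^ 2 = 3 := sq_sqrt (by norm_num)
  have s15 : √15 ^ 2 = 15 := sq_sqrt (by norm_num)
  -- squaring `(a - c) + b√3 = e√15` leaves `√3` only in the cross term
  have hsq : ((2 * (a - c) * b : ℤ) : ℝ) * √3 = (15 * e ^ 2 - (a - c) ^ 2 - 3 * b ^ 2 : ℤ) := by
    have h' : (a - c : ℝ) + b * √3 = e * √15 := by linarith
    push_cast
    linear_combination (a - c + b * √3 + e * √15) * h' - b ^ 2 * s3 + e ^ 2 * s15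
  rcases mul_eq_zero.mp (irr3.eq_zero_of_intCast_mul_eq_intCast hsq) with hac | hb
  · obtain rfl : a = c := by omega
    have h5 : (e : ℝ) * √5 = b := by
      have h35 : √15 = √3 * √5 := by rw [← sqrt_mul (by norm_num)]; norm_num
      rw [h35] at h
      have : (b : ℝ) * √3 = e * √5 * √3 := by linarith
      exact (mul_right_cancel₀ (by positivity) this).symm
    obtain rfl := irr5.eq_zero_of_intCast_mul_eq_intCast h5
    exact ⟨by exact_mod_cast (by simpa using h5 : (0 : ℝ) = b).symm, rfl⟩
  · subst hb
    refine ⟨rfl, irrational_sqrt_fifteen.eq_zero_of_intCast_mul_eq_intCast (n := a - c) ?_⟩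
    push_cast at h ⊢
    linarith

/-- There are no integers `M`, `N`, not both zero, such that
`(7 + 4√3)^M = (4 + √15)^N`. -/
theorem stmt_2 :
    ¬ ∃ M N : ℤ, (M ≠ 0 ∨ N ≠ 0) ∧
      (7 + 4 * Real.sqrt 3) ^ M = (4 + Real.sqrt 15) ^ N := by
  rintro ⟨M, N, hMN, heq⟩
  have h3 : (0 : ℤ) ≤ 3 := by norm_num
  have h15 : (0 : ℤ) ≤ 15 := by norm_num
  obtain ⟨v, hv, hvM⟩ := (IsUnit.of_mul_eq_one (a := (⟨7, 4⟩ : ℤ√3)) ⟨7, -4⟩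
    (by decide)).exists_isUnit_map_eq_zpow (Zsqrtd.toReal h3) M
  obtain ⟨w, -, hwN⟩ := (IsUnit.of_mul_eq_one (a := (⟨4, 1⟩ : ℤ√15)) ⟨4, -1⟩
    (by decide)).exists_isUnit_map_eq_zpow (Zsqrtd.toReal h15) N
  have ha : Zsqrtd.toReal h3 ⟨7, 4⟩ = 7 + 4 * √3 := by simp [Zsqrtd.toReal_apply]
  have hb : Zsqrtd.toReal h15 ⟨4, 1⟩ = 4 + √15 := by simp [Zsqrtd.toReal_apply]
  rw [ha] at hvM
  rw [hb] at hwN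
  have hv_im : v.im = 0 := by
    have hvw := hvM.trans (heq.trans hwN.symm)
    simp only [Zsqrtd.toReal_apply, Int.cast_ofNat] at hvw
    exact (eq_zero_of_add_mul_sqrt_three_eq_add_mul_sqrt_fifteen hvw).1
  have hM : (7 + 4 * √3) ^ M = 1 := by
    rw [← hvM]
    exact Zsqrtd.toReal_eq_one_of_isUnit h3 hv hv_im (hvM ▸ by positivity)
  have hM0 : M = 0 :=
    (zpow_eq_one_iff_right₀ (by positivity) (by nlinarith [sqrt_nonneg 3])).mp hM
  have hN0 : N = 0 :=
    (zpow_eq_one_iff_right₀ (by positivity) (by nlinarith [sqrt_nonneg 15])).mp (heq ▸ hM)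
  omega
end

section
/- Let Γ be a finite subgroup of an elliptic curve over ℂ (or of any abelian group of the form (ℤ/Nℤ) × (ℤ/Rℤ) with R | N), generated by three elements P₁, P₂, P₃, and let N be the exponent of Γ with Γ ≅ (ℤ/Nℤ) × (ℤ/Rℤ), R | N. Then there exists (α, β, γ) ∈ ℤ³ \ {0} with max{|α|,|β|,|γ|} ≤ c·(NR)^{1/3} for an absolute constant c, such that α·P₁ + β·P₂ + γ·P₃ = 0. -/
/-- Let `Γ` be a finite subgroup of an abelian group (e.g. of an elliptic curve over `ℂ`),
generated by three elements `P₁, P₂, P₃`, with `Γ ≅ (ℤ/Nℤ) × (ℤ/Rℤ)`, `R ∣ N`, and `N` the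
exponent of `Γ`. Then there exists `(α, β, γ) ∈ ℤ³ \ {0}` with
`max{|α|,|β|,|γ|} ≤ c (NR)^{1/3}` for an absolute constant `c`, such that
`α P₁ + β P₂ + γ P₃ = 0`. -/
theorem stmt_11 :
    ∃ c : ℝ, 0 < c ∧
      ∀ (A : Type*) [AddCommGroup A] (P₁ P₂ P₃ : A) (N R : ℕ), 0 < N → R ∣ N →
        Nonempty ((AddSubgroup.closure {P₁, P₂, P₃} : AddSubgroup A) ≃+ (ZMod N × ZMod R)) →
        AddMonoid.exponent (AddSubgroup.closure {P₁, P₂, P₃} : AddSubgroup A) = N →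
        ∃ α β γ : ℤ, ¬(α = 0 ∧ β = 0 ∧ γ = 0) ∧
          (max |α| (max |β| |γ|) : ℝ) ≤ c * ((N * R : ℕ) : ℝ) ^ ((1 : ℝ) / 3) ∧
          α • P₁ + β • P₂ + γ • P₃ = 0 := by
  refine ⟨2, by norm_num, ?_⟩
  intro A _ P₁ P₂ P₃ N R hN hRN he _
  obtain ⟨e⟩ := he
  have hR : 0 < R := Nat.pos_of_dvd_of_pos hRN hN
  haveI : NeZero N := ⟨hN.ne'⟩
  haveI : NeZero R := ⟨hR.ne'⟩
  set G := (AddSubgroup.closure {P₁, P₂, P₃} : AddSubgroup A) with hG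
  haveI : Fintype G := Fintype.ofEquiv _ e.toEquiv.symm
  have hcard : Fintype.card G = N * R := by
    rw [Fintype.card_congr e.toEquiv, Fintype.card_prod, ZMod.card, ZMod.card]
  have h1 : P₁ ∈ G := AddSubgroup.subset_closure (by simp)
  have h2 : P₂ ∈ G := AddSubgroup.subset_closure (by simp)
  have h3 : P₃ ∈ G := AddSubgroup.subset_closure (by simp)
  set x : ℝ := ((N * R : ℕ) : ℝ) ^ ((1 : ℝ) / 3) with hx
  have hx1 : (1 : ℝ) ≤ x := by
    rw [hx]
    apply Real.one_le_rpow (by exact_mod_cast Nat.one_le_iff_ne_zero.2 (by positivity)) (by norm_num)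
  have hxcube : x ^ (3 : ℕ) = ((N * R : ℕ) : ℝ) := by
    rw [hx, ← Real.rpow_natCast (((N * R : ℕ) : ℝ) ^ ((1:ℝ)/3)) 3,
      ← Real.rpow_mul (by positivity)]
    norm_num
  set M : ℕ := ⌈x⌉₊ with hM
  have hMx : x ≤ (M : ℝ) := Nat.le_ceil x
  have hbig : N * R < (M + 1) ^ 3 := by
    have : ((N * R : ℕ) : ℝ) < ((M + 1 : ℕ) : ℝ) ^ (3 : ℕ) := by
      rw [← hxcube]
      have : x < ((M + 1 : ℕ) : ℝ) := by push_cast; linarith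
      exact pow_lt_pow_left₀ this (by positivity) (by norm_num)
    exact_mod_cast this
  -- pigeonhole
  let f : Fin (M + 1) × Fin (M + 1) × Fin (M + 1) → G :=
    fun t => (t.1 : ℕ) • (⟨P₁, h1⟩ : G) + (t.2.1 : ℕ) • (⟨P₂, h2⟩ : G) + (t.2.2 : ℕ) • (⟨P₃, h3⟩ : G)
  have hlt : Fintype.card G < Fintype.card (Fin (M + 1) × Fin (M + 1) × Fin (M + 1)) := by
    simp only [Fintype.card_prod, Fintype.card_fin, hcard]
    calc N * R < (M + 1) ^ 3 := hbig
    _ = (M + 1) * ((M + 1) * (M + 1)) := by ring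
  obtain ⟨⟨a₁, b₁, c₁⟩, ⟨a₂, b₂, c₂⟩, hne, heq⟩ := Fintype.exists_ne_map_eq_of_card_lt f hlt
  refine ⟨(a₁ : ℤ) - (a₂ : ℤ), (b₁ : ℤ) - (b₂ : ℤ), (c₁ : ℤ) - (c₂ : ℤ), ?_, ?_, ?_⟩
  · rintro ⟨ha, hb, hc⟩
    apply hne
    have : (a₁ : ℤ) = a₂ := by omega
    have ha' : a₁ = a₂ := by exact_mod_cast Fin.ext (by exact_mod_cast this)
    have : (b₁ : ℤ) = b₂ := by omega
    have hb' : b₁ = b₂ := by exact_mod_cast Fin.ext (by exact_mod_cast this)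
    have : (c₁ : ℤ) = c₂ := by omega
    have hc' : c₁ = c₂ := by exact_mod_cast Fin.ext (by exact_mod_cast this)
    simp [ha', hb', hc']
  · have hb : ∀ u v : Fin (M + 1), |((u : ℤ)) - (v : ℤ)| ≤ (M : ℤ) := by
      intro u v
      have hu := u.isLt; have hv := v.isLt
      rw [abs_sub_le_iff]; omega
    have hMle : (M : ℝ) ≤ 2 * x := by
      have := Nat.ceil_lt_add_one (le_trans zero_le_one hx1)
      rw [hM]; linarith
    rw [max_le_iff, max_le_iff]
    exact ⟨le_trans (by exact_mod_cast hb a₁ a₂) hMle,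
      le_trans (by exact_mod_cast hb b₁ b₂) hMle,
      le_trans (by exact_mod_cast hb c₁ c₂) hMle⟩
  · have heq' : ((a₁ : ℤ)) • (⟨P₁, h1⟩ : G) + (b₁ : ℤ) • (⟨P₂, h2⟩ : G) + (c₁ : ℤ) • (⟨P₃, h3⟩ : G)
        = (a₂ : ℤ) • (⟨P₁, h1⟩ : G) + (b₂ : ℤ) • (⟨P₂, h2⟩ : G) + (c₂ : ℤ) • (⟨P₃, h3⟩ : G) := by
      have := heq
      simp only [f] at this
      push_cast
      simp only [natCast_zsmul]
      exact this
    have h0 : ((a₁ : ℤ) - a₂) • (⟨P₁, h1⟩ : G) + ((b₁ : ℤ) - b₂) • (⟨P₂, h2⟩ : G)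
        + ((c₁ : ℤ) - c₂) • (⟨P₃, h3⟩ : G) = 0 := by
      linear_combination (norm := module) heq'
    have := congrArg (Subtype.val) h0
    push_cast at this
    convert this using 2 <;> norm_num
end
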